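/- arXiv:2207.10325 — 5 statements merged into one kernel-verified Lean document; each statement's English description precedes it below -/
import Mathlib

section
/- Exact reduced cost bound: for any dual optimal solution u* of the primal LP and any index k such that the restricted problem (with x_k = 1 added) is feasible, one has 0 ≤ r_k(u*) ≤ R_k, where R_k = z*_{|k} − z* is the exact reduced cost (increase of the optimum when variable k is forced to 1). -/
open Matrix

/-- Primal feasibility for the LP with partition constraints:
Ax ≥ b, Σ_{j : grp j = i} x_j = 1 for each group i, x ≥ 0. -/
def Feas {m n E : ℕ} (A : Matrix (Fin m) (Fin E) ℝ) (b : Fin m → ℝ)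
    (grp : Fin E → Fin n) (x : Fin E → ℝ) : Prop :=
  b ≤ A.mulVec x ∧ (∀ i : Fin n, (∑ j : Fin E, if grp j = i then x j else 0) = 1) ∧ 0 ≤ x

/-- A 0/1 (integral) vector. -/
def Integral {E : ℕ} (x : Fin E → ℝ) : Prop := ∀ j, x j = 0 ∨ x j = 1

/-- Dual feasibility: u_q ≥ 0 and u_{grp j} + Σ_q A_{qj} u_q ≤ c_j for each index j. -/
def DualFeas {m n E : ℕ} (A : Matrix (Fin m) (Fin E) ℝ) (c : Fin E → ℝ)
    (grp : Fin E → Fin n) (uq : Fin m → ℝ) (uv : Fin n → ℝ) : Prop :=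
  0 ≤ uq ∧ ∀ j : Fin E, uv (grp j) + (∑ q : Fin m, A q j * uq q) ≤ c j

/-- Dual objective w(u) = b·u_q + Σ_i u_i. -/
def dualObj {m n : ℕ} (b : Fin m → ℝ) (uq : Fin m → ℝ) (uv : Fin n → ℝ) : ℝ :=
  b ⬝ᵥ uq + ∑ i : Fin n, uv i

/-- Reduced cost r_j(u) = c_j − u_{grp j} − Σ_q A_{qj} u_q. -/
def rc {m n E : ℕ} (A : Matrix (Fin m) (Fin E) ℝ) (c : Fin E → ℝ)
    (grp : Fin E → Fin n) (uq : Fin m → ℝ) (uv : Fin n → ℝ) (j : Fin E) : ℝ :=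
  c j - uv (grp j) - ∑ q : Fin m, A q j * uq q

/-!
For primal feasible `x` and dual feasible `u` the duality gap splits as
`c ⬝ᵥ x - w(u) = ∑ j, x j * r_j(u) + uq ⬝ᵥ (A *ᵥ x - b)`, a sum of nonnegative terms, so when
`x k = 1` the single term `r_k(u)` is bounded by the gap. For `x` optimal under `x k = 1` and `u`
dual optimal, the gap is `z*_{|k} - z*`.
-/

theorem sum_eq_sum_mul_of_groupSum_eq_one {n E : ℕ} (grp : Fin E → Fin n) {x : Fin E → ℝ}
    (hx : ∀ i : Fin n, (∑ j : Fin E, if grp j = i then x j else 0) = 1) (uv : Fin n → ℝ) :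
    ∑ i, uv i = ∑ j, uv (grp j) * x j := by
  rw [← Finset.sum_fiberwise Finset.univ grp]
  refine Finset.sum_congr rfl fun i _ => ?_
  rw [Finset.sum_congr rfl fun j hj => by rw [(Finset.mem_filter.1 hj).2], ← Finset.mul_sum,
    Finset.sum_filter, hx i, mul_one]

section Duality

variable {m n E : ℕ} {A : Matrix (Fin m) (Fin E) ℝ} {b : Fin m → ℝ} {c : Fin E → ℝ}
  {grp : Fin E → Fin n} {uq : Fin m → ℝ} {uv : Fin n → ℝ}

theorem rc_nonneg (hu : DualFeas A c grp uq uv) (j : Fin E) : 0 ≤ rc A c grp uq uv j := by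
  have := hu.2 j
  rw [rc]
  linarith

theorem sum_mul_rc (x : Fin E → ℝ) :
    ∑ j, x j * rc A c grp uq uv j
      = c ⬝ᵥ x - ∑ j, uv (grp j) * x j - uq ⬝ᵥ A *ᵥ x := by
  have hAx : uq ⬝ᵥ A *ᵥ x = ∑ j, x j * ∑ q, A q j * uq q := by
    simp only [dotProduct, mulVec, Finset.mul_sum]
    rw [Finset.sum_comm]
    exact Finset.sum_congr rfl fun j _ => Finset.sum_congr rfl fun q _ => by ring
  rw [hAx, dotProduct, ← Finset.sum_sub_distrib, ← Finset.sum_sub_distrib]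
  exact Finset.sum_congr rfl fun j _ => by rw [rc]; ring

theorem sum_mul_rc_le_sub_dualObj {x : Fin E → ℝ} (hx : Feas A b grp x)
    (hu : DualFeas A c grp uq uv) :
    ∑ j, x j * rc A c grp uq uv j ≤ c ⬝ᵥ x - dualObj b uq uv := by
  obtain ⟨hAx, hgrp, -⟩ := hx
  have hb : uq ⬝ᵥ b ≤ uq ⬝ᵥ A *ᵥ x := dotProduct_le_dotProduct_of_nonneg_left hAx hu.1
  rw [sum_mul_rc, dualObj, ← sum_eq_sum_mul_of_groupSum_eq_one grp hgrp, dotProduct_comm b]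
  linarith

theorem rc_le_sub_dualObj {x : Fin E → ℝ} (hx : Feas A b grp x) {k : Fin E} (hxk : x k = 1)
    (hu : DualFeas A c grp uq uv) :
    rc A c grp uq uv k ≤ c ⬝ᵥ x - dualObj b uq uv := by
  calc rc A c grp uq uv k = x k * rc A c grp uq uv k := by rw [hxk, one_mul]
    _ ≤ ∑ j, x j * rc A c grp uq uv j :=
        Finset.single_le_sum (fun j _ => mul_nonneg (hx.2.2 j) (rc_nonneg hu j))
          (Finset.mem_univ k)
    _ ≤ c ⬝ᵥ x - dualObj b uq uv := sum_mul_rc_le_sub_dualObj hx hu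

end Duality

theorem stmt3_general {m n E : ℕ} (A : Matrix (Fin m) (Fin E) ℝ) (b : Fin m → ℝ)
    (c : Fin E → ℝ) (grp : Fin E → Fin n) (k : Fin E) (zstar zk : ℝ)
    (hzk : IsLeast {z | ∃ x : Fin E → ℝ, Feas A b grp x ∧ x k = 1 ∧ c ⬝ᵥ x = z} zk)
    (uq : Fin m → ℝ) (uv : Fin n → ℝ)
    (hu : DualFeas A c grp uq uv) (hopt : dualObj b uq uv = zstar) :
    0 ≤ rc A c grp uq uv k ∧ rc A c grp uq uv k ≤ zk - zstar := by
  obtain ⟨x, hx, hxk, hcx⟩ := hzk.1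
  refine ⟨rc_nonneg hu k, ?_⟩
  rw [← hcx, ← hopt]
  exact rc_le_sub_dualObj hx hxk hu

/-- Exact reduced cost bound: for any dual optimal u* and any index k such that the
restricted problem (x_k = 1 added) has an (attained) optimum z*_{|k},
0 ≤ r_k(u*) ≤ R_k = z*_{|k} − z*. -/
theorem stmt3 {m n E : ℕ} (A : Matrix (Fin m) (Fin E) ℝ) (b : Fin m → ℝ)
    (c : Fin E → ℝ) (grp : Fin E → Fin n) (k : Fin E) (zstar zk : ℝ)
    (hz : IsLeast {z | ∃ x : Fin E → ℝ, Feas A b grp x ∧ c ⬝ᵥ x = z} zstar)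
    (hzk : IsLeast {z | ∃ x : Fin E → ℝ, Feas A b grp x ∧ x k = 1 ∧ c ⬝ᵥ x = z} zk)
    (uq : Fin m → ℝ) (uv : Fin n → ℝ)
    (hu : DualFeas A c grp uq uv) (hopt : dualObj b uq uv = zstar) :
    0 ≤ rc A c grp uq uv k ∧ rc A c grp uq uv k ≤ zk - zstar :=
  stmt3_general A b c grp k zstar zk hzk uq uv hu hopt
end

section
/- Cost-perturbation duality lemma: let z* and z*_{|k} be the optimal values of the primal LP and of the primal restricted by x_k = 1, with z*_{|k} finite, and set R_k = z*_{|k} − z* ≥ 0. Define a perturbed cost vector c̃ by c̃_k = c_k − R_k and c̃_j = c_j for j ≠ k. Assume the perturbed primal (with costs c̃) attains its optimum at an integral vertex whenever feasible (ideal formulation). Then the optimal value of the perturbed primal equals z*. -/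
open Matrix

section CostPerturbation

variable {ι : Type*} [Fintype ι] [DecidableEq ι]

theorem update_sub_dotProduct {R : Type*} [CommRing R] (c x : ι → R) (k : ι) (r : R) :
    Function.update c k (c k - r) ⬝ᵥ x = c ⬝ᵥ x - r * x k := by
  have hc : Function.update c k (c k - r) = c - Pi.single k r := by
    ext j
    rcases eq_or_ne j k with rfl | hjk <;> simp [*]
  rw [hc, sub_dotProduct, single_dotProduct]

variable (F : Set (ι → ℝ)) (c : ι → ℝ) (k : ι) {zstar zk : ℝ}

/-- If `x k = 0` the cost of `x` is unchanged; if `x k = 1` it was already at least `zk`. -/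
theorem le_update_dotProduct_of_zero_or_one
    (hz : zstar ∈ lowerBounds {z | ∃ x, x ∈ F ∧ c ⬝ᵥ x = z})
    (hzk : zk ∈ lowerBounds {z | ∃ x, x ∈ F ∧ x k = 1 ∧ c ⬝ᵥ x = z})
    {x : ι → ℝ} (hx : x ∈ F) (hxk : x k = 0 ∨ x k = 1) :
    zstar ≤ Function.update c k (c k - (zk - zstar)) ⬝ᵥ x := by
  rw [update_sub_dotProduct]
  rcases hxk with hxk | hxk
  · simpa [hxk] using hz ⟨x, hx, rfl⟩
  · have := hzk ⟨x, hx, hxk, rfl⟩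
    rw [hxk]
    linarith

theorem mem_update_dotProduct_image_of_mem
    (hzk : zk ∈ {z | ∃ x, x ∈ F ∧ x k = 1 ∧ c ⬝ᵥ x = z}) :
    zstar ∈ {z | ∃ x, x ∈ F ∧ Function.update c k (c k - (zk - zstar)) ⬝ᵥ x = z} := by
  obtain ⟨x, hx, hxk, rfl⟩ := hzk
  exact ⟨x, hx, by rw [update_sub_dotProduct, hxk]; ring⟩

end CostPerturbation

theorem stmt4_general {m n E : ℕ} (A : Matrix (Fin m) (Fin E) ℝ) (b : Fin m → ℝ)
    (c : Fin E → ℝ) (grp : Fin E → Fin n) (k : Fin E) (zstar zk : ℝ)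
    (hz : IsLeast {z | ∃ x : Fin E → ℝ, Feas A b grp x ∧ c ⬝ᵥ x = z} zstar)
    (hzk : IsLeast {z | ∃ x : Fin E → ℝ, Feas A b grp x ∧ x k = 1 ∧ c ⬝ᵥ x = z} zk)
    (ctilde : Fin E → ℝ)
    (hct : ctilde = Function.update c k (c k - (zk - zstar)))
    (hideal : (∃ x0 : Fin E → ℝ, Feas A b grp x0) →
      ∃ xt : Fin E → ℝ, Feas A b grp xt ∧ Integral xt ∧
        ∀ y : Fin E → ℝ, Feas A b grp y → ctilde ⬝ᵥ xt ≤ ctilde ⬝ᵥ y) :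
    IsLeast {z | ∃ x : Fin E → ℝ, Feas A b grp x ∧ ctilde ⬝ᵥ x = z} zstar := by
  subst hct
  let F : Set (Fin E → ℝ) := {x | Feas A b grp x}
  refine ⟨mem_update_dotProduct_image_of_mem F c k hzk.1, ?_⟩
  rintro z ⟨y, hy, rfl⟩
  obtain ⟨xt, hxt, hint, hopt⟩ := hideal ⟨y, hy⟩
  exact (le_update_dotProduct_of_zero_or_one F c k hz.2 hzk.2 hxt (hint k)).trans (hopt y hy)

/-- Cost-perturbation duality lemma: with z* and z*_{|k} the optimal values of the primal
and of the primal restricted by x_k = 1 (attained), R_k = z*_{|k} − z* ≥ 0, and the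
perturbed costs c̃ (c̃_k = c_k − R_k, c̃_j = c_j otherwise), if the perturbed primal
attains its optimum at an integral point whenever feasible, then the optimal value of
the perturbed primal equals z*. -/
theorem stmt4 {m n E : ℕ} (A : Matrix (Fin m) (Fin E) ℝ) (b : Fin m → ℝ)
    (c : Fin E → ℝ) (grp : Fin E → Fin n) (k : Fin E) (zstar zk : ℝ)
    (hz : IsLeast {z | ∃ x : Fin E → ℝ, Feas A b grp x ∧ c ⬝ᵥ x = z} zstar)
    (hzk : IsLeast {z | ∃ x : Fin E → ℝ, Feas A b grp x ∧ x k = 1 ∧ c ⬝ᵥ x = z} zk)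
    (hRk : 0 ≤ zk - zstar)
    (ctilde : Fin E → ℝ)
    (hct : ctilde = Function.update c k (c k - (zk - zstar)))
    (hideal : (∃ x0 : Fin E → ℝ, Feas A b grp x0) →
      ∃ xt : Fin E → ℝ, Feas A b grp xt ∧ Integral xt ∧
        ∀ y : Fin E → ℝ, Feas A b grp y → ctilde ⬝ᵥ xt ≤ ctilde ⬝ᵥ y) :
    IsLeast {z | ∃ x : Fin E → ℝ, Feas A b grp x ∧ ctilde ⬝ᵥ x = z} zstar :=
  stmt4_general A b c grp k zstar zk hz hzk ctilde hct hideal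
end

section
/- Existence of a dual solution achieving the exact reduced cost: for an ideal LP formulation with partition constraints, and any index k belonging to at least one feasible primal (integral) solution, there exists an optimal dual solution u* of the original LP such that r_k(u*) = R_k, where R_k = z*_{|k} − z*. -/
open Matrix

/-!
Shift the cost of `k` down by `R = z*_{|k} − z*`. An integral optimum of the shifted LP, which
exists by idealness, either avoids `k` (shifted cost `≥ z*`) or uses it (shifted cost
`≥ z*_{|k} − R = z*`), while an optimum `x̂` of the restricted LP has shifted cost exactly `z*`.
So the shifted LP still has optimum `z*`, and any optimal dual solution `u` of it is optimal for
the original LP: the dual objective does not involve the costs, and lowering one cost only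
tightens dual feasibility. Complementary slackness against `x̂`, which has `x̂_k = 1`, makes the
shifted reduced cost of `k` vanish, i.e. `r_k(u) = R`.

Strong duality comes from Farkas' lemma, for which the needed closedness of finitely generated
cones follows from the conic Carathéodory theorem.
-/

section Caratheodory

variable {κ 𝕜 M : Type*} [Field 𝕜] [LinearOrder 𝕜] [IsStrictOrderedRing 𝕜]
  [AddCommGroup M] [Module 𝕜 M] {v : κ → M}

theorem exists_nonneg_sum_erase_eq [DecidableEq κ] {s : Finset κ} {x : κ → 𝕜}
    (hx : ∀ j ∈ s, 0 ≤ x j) {f : κ → 𝕜} (hf : ∑ j ∈ s, f j • v j = 0)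
    (hpos : ∃ i ∈ s, 0 < f i) :
    ∃ i ∈ s, ∃ y : κ → 𝕜, (∀ j ∈ s.erase i, 0 ≤ y j) ∧
      ∑ j ∈ s.erase i, y j • v j = ∑ j ∈ s, x j • v j := by
  obtain ⟨i, hi, hmin⟩ := (s.filter (0 < f ·)).exists_min_image (fun j => x j / f j)
    (let ⟨i, hi, hfi⟩ := hpos; ⟨i, Finset.mem_filter.2 ⟨hi, hfi⟩⟩)
  rw [Finset.mem_filter] at hi
  -- subtract the largest multiple of the relation `f` that keeps the coefficients nonnegative
  set α := x i / f i
  have hα : 0 ≤ α := div_nonneg (hx i hi.1) hi.2.le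
  refine ⟨i, hi.1, fun j => x j - α * f j, fun j hj => ?_, ?_⟩
  · have hjs := Finset.mem_of_mem_erase hj
    rcases le_or_gt (f j) 0 with hfj | hfj
    · nlinarith [hx j hjs]
    · have := hmin j (Finset.mem_filter.2 ⟨hjs, hfj⟩)
      rw [le_div_iff₀ hfj] at this
      linarith
  · rw [Finset.sum_erase s (by simp [α, div_mul_cancel₀ _ hi.2.ne'])]
    simp only [sub_smul, mul_smul, Finset.sum_sub_distrib, ← Finset.smul_sum, hf, smul_zero,
      sub_zero]

theorem exists_linearIndepOn_nonneg_sum_eq (s : Finset κ) (x : κ → 𝕜) (hx : ∀ j ∈ s, 0 ≤ x j) :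
    ∃ t : Finset κ, LinearIndepOn 𝕜 v (t : Set κ) ∧ ∃ y : κ → 𝕜, (∀ j ∈ t, 0 ≤ y j) ∧
      ∑ j ∈ t, y j • v j = ∑ j ∈ s, x j • v j := by
  classical
  induction s using Finset.strongInduction generalizing x with
  | _ s ih =>
  by_cases hs : LinearIndepOn 𝕜 v (s : Set κ)
  · exact ⟨s, hs, x, hx, rfl⟩
  obtain ⟨f, hf, hpos⟩ : ∃ f : κ → 𝕜, ∑ j ∈ s, f j • v j = 0 ∧ ∃ i ∈ s, 0 < f i := by
    obtain ⟨f, hf, i, hi, hfi⟩ := not_linearIndepOn_finset_iff.mp hs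
    rcases hfi.lt_or_gt with hneg | hpos
    · exact ⟨-f, by simp [neg_smul, hf], i, hi, by simpa⟩
    · exact ⟨f, hf, i, hi, hpos⟩
  obtain ⟨i, hi, y, hy, hsum⟩ := exists_nonneg_sum_erase_eq hx hf hpos
  obtain ⟨t, ht, z, hz, hzsum⟩ := ih _ (Finset.erase_ssubset hi) y hy
  exact ⟨t, ht, z, hz, hzsum.trans hsum⟩

end Caratheodory

section Farkas

variable {κ E : Type*} [Fintype κ] [AddCommGroup E] [Module ℝ E]

theorem mem_map_positive_linearCombination (v : κ → E) (j : κ) :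
    v j ∈ (PointedCone.positive ℝ (κ → ℝ)).map (Fintype.linearCombination ℝ v) := by
  classical
  exact PointedCone.mem_map.2
    ⟨Pi.single j 1, (PointedCone.mem_positive ..).2 (Pi.single_nonneg.2 zero_le_one), by simp⟩

theorem isClosed_map_positive_linearCombination [TopologicalSpace E] [IsTopologicalAddGroup E]
    [ContinuousSMul ℝ E] [T2Space E] (v : κ → E) :
    IsClosed ((PointedCone.positive ℝ (κ → ℝ)).map (Fintype.linearCombination ℝ v) : Set E) := by
  set C := (PointedCone.positive ℝ (κ → ℝ)).map (Fintype.linearCombination ℝ v)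
  -- Carathéodory: `C` is the finite union of the cones spanned by linearly independent subfamilies
  have hC : (C : Set E) = ⋃ (t : Finset κ) (_ : LinearIndepOn ℝ v (t : Set κ)),
      Fintype.linearCombination ℝ (fun j : (t : Set κ) => v j) '' Set.Ici 0 := by
    ext z
    simp only [C, PointedCone.coe_map, Set.mem_iUnion, Set.mem_image, Set.mem_Ici,
      SetLike.mem_coe, PointedCone.mem_positive, Fintype.linearCombination_apply]
    constructor
    · rintro ⟨x, hx, rfl⟩
      obtain ⟨t, ht, y, hy, hsum⟩ :=
        exists_linearIndepOn_nonneg_sum_eq (v := v) Finset.univ x (fun j _ => hx j)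
      exact ⟨t, ht, fun j => y j, fun j => hy j j.2, by
        rw [← hsum, ← Finset.sum_coe_sort t]; rfl⟩
    · rintro ⟨t, -, y, hy, rfl⟩
      exact C.sum_mem fun j _ => C.smul_mem (hy j) (mem_map_positive_linearCombination v j)
  rw [hC]
  refine isClosed_iUnion_of_finite fun t => isClosed_iUnion_of_finite fun ht => ?_
  exact (LinearMap.isClosedEmbedding_of_injective (LinearMap.ker_eq_bot.2
    (linearIndependent_iff_injective_fintypeLinearCombination.1 ht))).isClosedMap _ isClosed_Ici

theorem exists_strongDual_of_notMem_map_positive [TopologicalSpace E] [IsTopologicalAddGroup E]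
    [ContinuousSMul ℝ E] [T2Space E] [LocallyConvexSpace ℝ E] (v : κ → E) {w : E}
    (hw : w ∉ (PointedCone.positive ℝ (κ → ℝ)).map (Fintype.linearCombination ℝ v)) :
    ∃ f : StrongDual ℝ E, (∀ j, 0 ≤ f (v j)) ∧ f w < 0 := by
  let C : ProperCone ℝ E := ⟨_, isClosed_map_positive_linearCombination v⟩
  obtain ⟨f, hf, hfw⟩ := C.hyperplane_separation_point hw
  exact ⟨f, fun j => hf _ (mem_map_positive_linearCombination v j), hfw⟩

end Farkas

namespace Matrix

variable {ι κ : Type*} [Fintype ι] [Fintype κ]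

theorem exists_nonneg_vecMul_eq_or_exists_mulVec_nonneg (Q : Matrix ι κ ℝ) (w : κ → ℝ) :
    (∃ x, 0 ≤ x ∧ x ᵥ* Q = w) ∨ ∃ z, 0 ≤ Q *ᵥ z ∧ w ⬝ᵥ z < 0 := by
  classical
  by_cases hw :
      w ∈ (PointedCone.positive ℝ (ι → ℝ)).map (Fintype.linearCombination ℝ fun i => Q i)
  · obtain ⟨x, hx, rfl⟩ := PointedCone.mem_map.1 hw
    exact .inl ⟨x, hx, by simp [vecMul_eq_sum, Fintype.linearCombination_apply]⟩
  · obtain ⟨f, hf, hfw⟩ := exists_strongDual_of_notMem_map_positive _ hw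
    have hf_apply (u : κ → ℝ) : f u = u ⬝ᵥ fun j => f (Pi.single j 1) := by
      conv_lhs => rw [pi_eq_sum_univ' u]
      simp [dotProduct]
    exact .inr ⟨_, fun i => (hf_apply _).symm.trans_ge (hf i), (hf_apply w).symm.trans_lt hfw⟩

theorem exists_nonneg_vecMul_le_or_exists_nonneg_mulVec_nonneg (P : Matrix ι κ ℝ) (w : κ → ℝ) :
    (∃ y, 0 ≤ y ∧ y ᵥ* P ≤ w) ∨ ∃ z, 0 ≤ z ∧ 0 ≤ P *ᵥ z ∧ w ⬝ᵥ z < 0 := by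
  classical
  rcases exists_nonneg_vecMul_eq_or_exists_mulVec_nonneg (fromRows P (1 : Matrix κ κ ℝ)) w with
    ⟨x, hx, hxw⟩ | ⟨z, hz, hzw⟩
  · refine .inl ⟨x ∘ Sum.inl, fun i => hx _, ?_⟩
    rw [vecMul_fromRows, vecMul_one] at hxw
    rw [← hxw]
    exact le_add_of_nonneg_right fun j => hx _
  · rw [fromRows_mulVec, one_mulVec, ← Sum.elim_zero_zero, Sum.elim_le_elim_iff] at hz
    exact .inr ⟨z, hz.2, hz.1, hzw⟩

end Matrix

section LinearProgramming

variable {ι κ : Type*} [Fintype ι] [Fintype κ] {M : Matrix ι κ ℝ} {d : ι → ℝ} {c : κ → ℝ}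
  {x : κ → ℝ} {y : ι → ℝ}

theorem weak_duality (hx : 0 ≤ x) (hMx : d ≤ M *ᵥ x) (hy : 0 ≤ y) (hyM : y ᵥ* M ≤ c) :
    d ⬝ᵥ y ≤ c ⬝ᵥ x :=
  calc d ⬝ᵥ y = y ⬝ᵥ d := dotProduct_comm _ _
    _ ≤ y ⬝ᵥ (M *ᵥ x) := dotProduct_le_dotProduct_of_nonneg_left hMx hy
    _ = (y ᵥ* M) ⬝ᵥ x := dotProduct_mulVec _ _ _
    _ ≤ c ⬝ᵥ x := dotProduct_le_dotProduct_of_nonneg_right hyM hx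

theorem strong_duality {z₀ : ℝ} (h : IsLeast {z | ∃ x, (0 ≤ x ∧ d ≤ M *ᵥ x) ∧ c ⬝ᵥ x = z} z₀) :
    ∃ y, 0 ≤ y ∧ y ᵥ* M ≤ c ∧ d ⬝ᵥ y = z₀ := by
  obtain ⟨⟨x₀, ⟨hx₀, hMx₀⟩, rfl⟩, hmin⟩ := h
  rcases exists_nonneg_vecMul_le_or_exists_nonneg_mulVec_nonneg
      (fromCols M (replicateCol Unit (-d))) (Sum.elim c fun _ => -(c ⬝ᵥ x₀)) with
    ⟨y, hy, hyM⟩ | ⟨z, hz, hMz, hcz⟩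
  · rw [vecMul_fromCols, Sum.elim_le_elim_iff] at hyM
    have hdy : c ⬝ᵥ x₀ ≤ d ⬝ᵥ y := by
      simpa [vecMul, dotProduct, replicateCol, mul_comm] using hyM.2 ()
    exact ⟨y, hy, hyM.1, le_antisymm (weak_duality hx₀ hMx₀ hy hyM.1) hdy⟩
  · obtain ⟨x, t, rfl⟩ : ∃ x t, z = Sum.elim x fun _ : Unit => t :=
      ⟨z ∘ Sum.inl, z (Sum.inr ()), by ext (_ | _) <;> rfl⟩
    have hx : 0 ≤ x := fun j => hz (Sum.inl j)
    have ht : 0 ≤ t := hz (Sum.inr ())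
    have hMx : t • d ≤ M *ᵥ x := fun i => by
      simpa [mulVec, dotProduct, replicateCol, mul_comm] using hMz i
    have hcx : c ⬝ᵥ x < t * (c ⬝ᵥ x₀) := by
      simpa [dotProduct, mul_comm] using hcz
    -- `(x + x₀) / (t + 1)` is feasible and beats the optimum
    have hfeas : d ≤ M *ᵥ ((t + 1)⁻¹ • (x + x₀)) := by
      intro i
      have hi := hMx i
      have hi₀ := hMx₀ i
      rw [mulVec_smul, mulVec_add]
      simp only [Pi.smul_apply, Pi.add_apply, smul_eq_mul] at hi ⊢
      rw [le_inv_mul_iff₀ (by positivity)]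
      linarith
    have hcost : c ⬝ᵥ ((t + 1)⁻¹ • (x + x₀)) < c ⬝ᵥ x₀ := by
      rw [dotProduct_smul, dotProduct_add, smul_eq_mul, inv_mul_lt_iff₀ (by positivity)]
      linarith
    have hx' : 0 ≤ (t + 1)⁻¹ • (x + x₀) := smul_nonneg (by positivity) (add_nonneg hx hx₀)
    exact ((hmin ⟨_, ⟨hx', hfeas⟩, rfl⟩).not_gt hcost).elim

theorem vecMul_apply_eq_of_dotProduct_eq (hx : 0 ≤ x) (hMx : d ≤ M *ᵥ x) (hy : 0 ≤ y)
    (hyM : y ᵥ* M ≤ c) (hopt : c ⬝ᵥ x = d ⬝ᵥ y) {j : κ} (hj : 0 < x j) : (y ᵥ* M) j = c j := by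
  have hgap : (c - y ᵥ* M) ⬝ᵥ x + y ⬝ᵥ (M *ᵥ x - d) = 0 := by
    rw [sub_dotProduct, dotProduct_sub, dotProduct_mulVec, hopt, dotProduct_comm y d]
    ring
  have hslack : 0 ≤ y ⬝ᵥ (M *ᵥ x - d) := dotProduct_nonneg_of_nonneg hy (sub_nonneg.2 hMx)
  have hreduced : 0 ≤ (c - y ᵥ* M) ⬝ᵥ x := dotProduct_nonneg_of_nonneg (sub_nonneg.2 hyM) hx
  have hterm := (Finset.sum_eq_zero_iff_of_nonneg fun i _ =>
    mul_nonneg (sub_nonneg.2 (hyM i)) (hx i)).1 (by linarith : (c - y ᵥ* M) ⬝ᵥ x = 0) j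
    (Finset.mem_univ j)
  exact (sub_eq_zero.1 ((mul_eq_zero.1 hterm).resolve_right hj.ne')).symm

end LinearProgramming

theorem isLeast_sub_single_dotProduct {κ : Type*} [Fintype κ] [DecidableEq κ]
    {S : Set (κ → ℝ)} {c xt : κ → ℝ} {k : κ} {zstar zk : ℝ}
    (hz : IsLeast {z | ∃ x ∈ S, c ⬝ᵥ x = z} zstar)
    (hzk : IsLeast {z | ∃ x ∈ S, x k = 1 ∧ c ⬝ᵥ x = z} zk)
    (hxt : xt ∈ S) (hxtk : xt k = 0 ∨ xt k = 1)
    (hmin : ∀ x ∈ S,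
      (c - Pi.single k (zk - zstar)) ⬝ᵥ xt ≤ (c - Pi.single k (zk - zstar)) ⬝ᵥ x) :
    IsLeast {z | ∃ x ∈ S, (c - Pi.single k (zk - zstar)) ⬝ᵥ x = z} zstar := by
  have hcost (x : κ → ℝ) :
      (c - Pi.single k (zk - zstar)) ⬝ᵥ x = c ⬝ᵥ x - (zk - zstar) * x k := by
    rw [sub_dotProduct, single_dotProduct]
  refine ⟨?_, ?_⟩
  · obtain ⟨x, hx, hxk, hcx⟩ := hzk.1
    exact ⟨x, hx, by rw [hcost, hxk, hcx]; ring⟩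
  · rintro _ ⟨x, hx, rfl⟩
    refine le_trans ?_ (hmin x hx)
    rcases hxtk with h | h
    · simpa [hcost, h] using hz.2 ⟨xt, hxt, rfl⟩
    · have := hzk.2 ⟨xt, hxt, h, rfl⟩
      rw [hcost, h]
      linarith

section GroupMatrix

variable {ι κ : Type*} [DecidableEq ι]

def groupMatrix (grp : κ → ι) : Matrix ι κ ℝ :=
  Matrix.of fun i j => if grp j = i then 1 else 0

theorem groupMatrix_mulVec [Fintype κ] (grp : κ → ι) (x : κ → ℝ) (i : ι) :
    (groupMatrix grp *ᵥ x) i = ∑ j, if grp j = i then x j else 0 := by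
  simp [groupMatrix, mulVec, dotProduct]

theorem vecMul_groupMatrix [Fintype ι] (grp : κ → ι) (u : ι → ℝ) (j : κ) :
    (u ᵥ* groupMatrix grp) j = u (grp j) := by
  simp [groupMatrix, vecMul, dotProduct]

end GroupMatrix

section PartitionLP

variable {m n E : ℕ} {A : Matrix (Fin m) (Fin E) ℝ} {b : Fin m → ℝ} {c : Fin E → ℝ}
  {grp : Fin E → Fin n}

/-- The partition equalities `groupMatrix grp *ᵥ x = 1` enter as the two inequalities
`≥ 1` and `-· ≥ -1`. -/
def feasMatrix (A : Matrix (Fin m) (Fin E) ℝ) (grp : Fin E → Fin n) :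
    Matrix (Fin m ⊕ Fin n ⊕ Fin n) (Fin E) ℝ :=
  fromRows A (fromRows (groupMatrix grp) (-groupMatrix grp))

def feasRhs (n : ℕ) (b : Fin m → ℝ) : Fin m ⊕ Fin n ⊕ Fin n → ℝ :=
  Sum.elim b (Sum.elim 1 (-1))

theorem feas_iff {x : Fin E → ℝ} :
    Feas A b grp x ↔ 0 ≤ x ∧ feasRhs n b ≤ feasMatrix A grp *ᵥ x := by
  simp only [Feas, feasRhs, feasMatrix, fromRows_mulVec, neg_mulVec, Sum.elim_le_elim_iff,
    neg_le_neg_iff, ← le_antisymm_iff, funext_iff, Pi.one_apply, groupMatrix_mulVec, eq_comm]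
  tauto

theorem rc_sub_eq (uq : Fin m → ℝ) (up um : Fin n → ℝ) (j : Fin E) :
    rc A c grp uq (up - um) j = c j - (Sum.elim uq (Sum.elim up um) ᵥ* feasMatrix A grp) j := by
  rw [feasMatrix, sumElim_vecMul_fromRows, sumElim_vecMul_fromRows, vecMul_neg]
  simp only [rc, Pi.add_apply, Pi.neg_apply, Pi.sub_apply, vecMul_groupMatrix]
  simp only [vecMul, dotProduct, mul_comm (A _ j)]
  ring

theorem dualObj_sub_eq (uq : Fin m → ℝ) (up um : Fin n → ℝ) :
    dualObj b uq (up - um) = feasRhs n b ⬝ᵥ Sum.elim uq (Sum.elim up um) := by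
  simp only [dualObj, feasRhs, dotProduct, Fintype.sum_sum_type, Sum.elim_inl, Sum.elim_inr,
    Pi.sub_apply, Pi.one_apply, Pi.neg_apply, one_mul, neg_mul, Finset.sum_sub_distrib,
    Finset.sum_neg_distrib]
  ring

theorem dualFeas_sub_of_vecMul_le {uq : Fin m → ℝ} {up um : Fin n → ℝ}
    (hy : 0 ≤ Sum.elim uq (Sum.elim up um))
    (hyM : Sum.elim uq (Sum.elim up um) ᵥ* feasMatrix A grp ≤ c) :
    DualFeas A c grp uq (up - um) := by
  refine ⟨fun q => hy (Sum.inl q), fun j => ?_⟩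
  have h := rc_sub_eq (A := A) (c := c) (grp := grp) uq up um j
  rw [rc] at h
  linarith [hyM j]

end PartitionLP

theorem stmt5_general {m n E : ℕ} (A : Matrix (Fin m) (Fin E) ℝ) (b : Fin m → ℝ)
    (c : Fin E → ℝ) (grp : Fin E → Fin n) (k : Fin E) (zstar zk : ℝ)
    (hz : IsLeast {z | ∃ x : Fin E → ℝ, Feas A b grp x ∧ c ⬝ᵥ x = z} zstar)
    (hzk : IsLeast {z | ∃ x : Fin E → ℝ, Feas A b grp x ∧ x k = 1 ∧ c ⬝ᵥ x = z} zk)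
    (hideal : ∀ c' : Fin E → ℝ, (∃ x0 : Fin E → ℝ, Feas A b grp x0) →
      ∃ xt : Fin E → ℝ, Feas A b grp xt ∧ Integral xt ∧
        ∀ y : Fin E → ℝ, Feas A b grp y → c' ⬝ᵥ xt ≤ c' ⬝ᵥ y) :
    ∃ (uq : Fin m → ℝ) (uv : Fin n → ℝ),
      DualFeas A c grp uq uv ∧ dualObj b uq uv = zstar ∧
      rc A c grp uq uv k = zk - zstar := by
  obtain ⟨xk, hxk, hxkk, hcxk⟩ := hzk.1
  set c' := c - Pi.single k (zk - zstar)
  have hc'xk : c' ⬝ᵥ xk = zstar := by rw [sub_dotProduct, single_dotProduct, hxkk, hcxk]; ring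
  have hR : 0 ≤ zk - zstar := sub_nonneg.2 (hz.2 ⟨xk, hxk, hcxk⟩)
  obtain ⟨xt, hxt, hxt_int, hxt_min⟩ := hideal c' ⟨xk, hxk⟩
  have hopt := isLeast_sub_single_dotProduct (S := {x | Feas A b grp x}) hz hzk hxt (hxt_int k)
    hxt_min
  simp only [feas_iff] at hopt hxk
  obtain ⟨y, hy, hyM, hyd⟩ := strong_duality hopt
  obtain ⟨uq, up, um, rfl⟩ : ∃ uq up um, y = Sum.elim uq (Sum.elim up um) :=
    ⟨_, _, _, by ext (_ | _ | _) <;> rfl⟩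
  have hslack := vecMul_apply_eq_of_dotProduct_eq hxk.1 hxk.2 hy hyM (hc'xk.trans hyd.symm)
    (j := k) (by simp [hxkk])
  have hc' : c' ≤ c := sub_le_self _ (Pi.single_nonneg.2 hR)
  refine ⟨uq, up - um, dualFeas_sub_of_vecMul_le hy (hyM.trans hc'),
    by rw [dualObj_sub_eq, hyd], ?_⟩
  rw [rc_sub_eq, hslack]
  simp

/-- Existence of a dual solution achieving the exact reduced cost: for an ideal LP
formulation with partition constraints (optima attained at integral points for every
cost vector) and any index k belonging to a feasible integral solution, there exists
an optimal dual solution u* with r_k(u*) = R_k = z*_{|k} − z*. -/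
theorem stmt5 {m n E : ℕ} (A : Matrix (Fin m) (Fin E) ℝ) (b : Fin m → ℝ)
    (c : Fin E → ℝ) (grp : Fin E → Fin n) (k : Fin E) (zstar zk : ℝ)
    (hz : IsLeast {z | ∃ x : Fin E → ℝ, Feas A b grp x ∧ c ⬝ᵥ x = z} zstar)
    (hzk : IsLeast {z | ∃ x : Fin E → ℝ, Feas A b grp x ∧ x k = 1 ∧ c ⬝ᵥ x = z} zk)
    (hideal : ∀ c' : Fin E → ℝ, (∃ x0 : Fin E → ℝ, Feas A b grp x0) →
      ∃ xt : Fin E → ℝ, Feas A b grp xt ∧ Integral xt ∧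
        ∀ y : Fin E → ℝ, Feas A b grp y → c' ⬝ᵥ xt ≤ c' ⬝ᵥ y)
    (hk : ∃ x : Fin E → ℝ, Feas A b grp x ∧ Integral x ∧ x k = 1) :
    ∃ (uq : Fin m → ℝ) (uv : Fin n → ℝ),
      DualFeas A c grp uq uv ∧ dualObj b uq uv = zstar ∧
      rc A c grp uq uv k = zk - zstar :=
  stmt5_general A b c grp k zstar zk hz hzk hideal
end

section
/- Single dual solution suffices for satisfaction filtering: consider the 0/1-cost instance where every index of a complete variable-value set gets cost 0 if it belongs to the original domain and 1 otherwise, with an ideal LP formulation whose optimum is z* = 0. Then there exists a single dual optimal solution ũ such that, for every index ij, the exact reduced cost R_{ij} ≥ 1 (i.e., ij lies in no zero-cost integral solution) if and only if r_{ij}(ũ) > 0. -/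
/-!
Lower the cost of every index with `R j ≥ 1` by the same `ε = 1/(E+1)`. An integral solution
using such an index costs at least `1 > ε·E`, so every integral solution keeps a nonnegative
perturbed cost; by ideality so does every feasible point, and LP duality (proved from Farkas'
lemma) gives a dual solution for the perturbed costs. It is dual optimal for `c`, with reduced
cost at least `ε` on each such index. Conversely, if `R j < 1`, rewarding `x j` and using
ideality once more yields a zero-cost solution with `x j = 1`, so complementary slackness forces
`r j = 0` for every dual optimal solution.
-/

open Matrix

open Finset in
theorem Finset.sum_insert_update {ι α M : Type*} [AddCommMonoid M] [DecidableEq ι] {s : Finset ι}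
    {i₀ : ι} (h : i₀ ∉ s) (w : ι → α) (t : α) (g : ι → α → M) :
    ∑ i ∈ insert i₀ s, g i (Function.update w i₀ t i) = g i₀ t + ∑ i ∈ s, g i (w i) := by
  rw [sum_insert h, Function.update_self]
  congr 1
  exact sum_congr rfl fun i hi => by rw [Function.update_of_ne (ne_of_mem_of_not_mem hi h)]

section Farkas

variable {𝕜 W ι : Type*} [Field 𝕜] [LinearOrder 𝕜] [AddCommGroup W] [Module 𝕜 W]
  [DecidableEq ι] {s : Finset ι} {i₀ : ι} {a : ι → W →ₗ[𝕜] 𝕜} {f : ι → 𝕜}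

theorem exists_certificate_insert (hi₀ : i₀ ∉ s) {w : ι → 𝕜} (hw : 0 ≤ w) {t : 𝕜} (ht : 0 ≤ t)
    (ha : t • a i₀ + ∑ i ∈ s, w i • a i = 0) (hf : t * f i₀ + ∑ i ∈ s, w i * f i < 0) :
    ∃ w : ι → 𝕜, 0 ≤ w ∧ ∑ i ∈ insert i₀ s, w i • a i = 0 ∧
      ∑ i ∈ insert i₀ s, w i * f i < 0 := by
  refine ⟨Function.update w i₀ t, fun i => ?_, ?_, ?_⟩
  · rcases eq_or_ne i i₀ with rfl | hi
    · simpa using ht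
    · simpa [Function.update_of_ne hi] using hw i
  · rwa [Finset.sum_insert_update hi₀ w t fun i r => r • a i]
  · rwa [Finset.sum_insert_update hi₀ w t fun i r => r * f i]

variable [IsStrictOrderedRing 𝕜]

theorem forall_insert_le_of_hyperplane {d : W} (hd : a i₀ d = 1) {y : W}
    (hy : ∀ i ∈ s, (a i - a i d • a i₀) y ≤ f i - a i d * f i₀) :
    ∀ i ∈ insert i₀ s, a i (y + (f i₀ - a i₀ y) • d) ≤ f i := by
  refine Finset.forall_mem_insert _ _ _ |>.2 ⟨by simp [hd], fun i hi => ?_⟩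
  have := hy i hi
  simp only [LinearMap.sub_apply, LinearMap.smul_apply, smul_eq_mul] at this
  simp only [map_add, map_smul, smul_eq_mul]
  linarith

theorem farkas_alternative (s : Finset ι) (a : ι → W →ₗ[𝕜] 𝕜) (f : ι → 𝕜) :
    (∃ y, ∀ i ∈ s, a i y ≤ f i) ∨
      ∃ w : ι → 𝕜, 0 ≤ w ∧ ∑ i ∈ s, w i • a i = 0 ∧ ∑ i ∈ s, w i * f i < 0 := by
  induction s using Finset.induction_on generalizing a f with
  | empty => exact Or.inl ⟨0, by simp⟩
  | insert i₀ s hi₀ ih =>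
    obtain ⟨y₀, hy₀⟩ | ⟨w, hw, hwa, hwf⟩ := ih a f
    swap
    · exact Or.inr (exists_certificate_insert hi₀ hw le_rfl (by simpa using hwa)
        (by simpa using hwf))
    by_cases hy₀i₀ : a i₀ y₀ ≤ f i₀
    · exact Or.inl ⟨y₀, Finset.forall_mem_insert _ _ _ |>.2 ⟨hy₀i₀, hy₀⟩⟩
    rw [not_le] at hy₀i₀
    rcases eq_or_ne (a i₀) 0 with ha₀ | ha₀
    · refine Or.inr (exists_certificate_insert hi₀ le_rfl zero_le_one (by simp [ha₀]) ?_)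
      simpa [ha₀] using hy₀i₀
    -- restrict to the hyperplane `a i₀ = f i₀`, parametrised along some `d` with `a i₀ d = 1`
    obtain ⟨d, hd⟩ := ((a i₀).surjective_or_eq_zero.resolve_right ha₀) 1
    obtain ⟨y, hy⟩ | ⟨w, hw, hwa, hwf⟩ :=
      ih (fun i => a i - a i d • a i₀) (fun i => f i - a i d * f i₀)
    · exact Or.inl ⟨_, forall_insert_le_of_hyperplane hd hy⟩
    set l := ∑ i ∈ s, w i * a i d
    have hwa' : ∑ i ∈ s, w i • a i = l • a i₀ := by
      simp only [smul_sub, Finset.sum_sub_distrib, smul_smul, sub_eq_zero] at hwa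
      rw [hwa, Finset.sum_smul]
    have hwf' : ∑ i ∈ s, w i * f i < l * f i₀ := by
      simp only [mul_sub, Finset.sum_sub_distrib] at hwf
      simp only [l, Finset.sum_mul, mul_assoc]
      linarith
    rcases le_or_gt l 0 with hl | hl
    · exact Or.inr (exists_certificate_insert hi₀ hw (neg_nonneg.2 hl) (by rw [hwa']; module)
        (by linarith))
    -- for `l > 0` the certificate would force `a i₀ y₀ < f i₀`
    exfalso
    have key : l * a i₀ y₀ ≤ ∑ i ∈ s, w i * f i := by
      have := congrArg (· y₀) hwa'
      simp only [LinearMap.sum_apply, LinearMap.smul_apply, smul_eq_mul] at this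
      rw [← this]
      exact Finset.sum_le_sum fun i hi => mul_le_mul_of_nonneg_left (hy₀ i hi) (hw i)
    nlinarith

end Farkas

section PartitionLP

variable {m n E : ℕ} {A : Matrix (Fin m) (Fin E) ℝ} {b : Fin m → ℝ} {grp : Fin E → Fin n}

theorem feas_inv_smul_add {x₀ x : Fin E → ℝ} {μ t : ℝ} (hx₀ : Feas A b grp x₀) (hx : 0 ≤ x)
    (hμ : 0 ≤ μ) (hAx : μ • b ≤ A *ᵥ x) (hgrp : ∀ i, (∑ j, if grp j = i then x j else 0) = μ)
    (ht : 0 ≤ t) : Feas A b grp ((1 + t * μ)⁻¹ • (x₀ + t • x)) := by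
  have hs : 0 < 1 + t * μ := by positivity
  refine ⟨fun q => ?_, fun i => ?_, fun j => ?_⟩
  · have h₀ := hx₀.1 q
    have h₁ := mul_le_mul_of_nonneg_left (hAx q) ht
    simp only [Pi.smul_apply, Pi.add_apply, smul_eq_mul, mulVec_smul, mulVec_add] at h₀ h₁ ⊢
    rw [le_inv_mul_iff₀ hs]
    linarith
  · have h₀ := hx₀.2.1 i
    have h₁ := hgrp i
    rw [← Finset.sum_filter] at h₀ h₁ ⊢
    simp only [Pi.smul_apply, Pi.add_apply, smul_eq_mul, ← Finset.mul_sum,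
      Finset.sum_add_distrib, h₀, h₁]
    exact inv_mul_cancel₀ hs.ne'
  · exact mul_nonneg (inv_nonneg.2 hs.le) (add_nonneg (hx₀.2.2 j) (mul_nonneg ht (hx j)))

theorem dotProduct_nonneg_of_recession {c x₀ x : Fin E → ℝ} {μ : ℝ} (hx₀ : Feas A b grp x₀)
    (hx : 0 ≤ x) (hμ : 0 ≤ μ) (hAx : μ • b ≤ A *ᵥ x)
    (hgrp : ∀ i, (∑ j, if grp j = i then x j else 0) = μ)
    (hc : ∀ y, Feas A b grp y → 0 ≤ c ⬝ᵥ y) : 0 ≤ c ⬝ᵥ x := by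
  have hray : ∀ t, 0 ≤ t → 0 ≤ c ⬝ᵥ x₀ + t * c ⬝ᵥ x := fun t ht => by
    have := hc _ (feas_inv_smul_add hx₀ hx hμ hAx hgrp ht)
    rwa [dotProduct_smul, dotProduct_add, dotProduct_smul, smul_eq_mul, smul_eq_mul,
      mul_nonneg_iff_of_pos_left (by positivity)] at this
  by_contra! hneg
  have := hray ((c ⬝ᵥ x₀ + 1) / -(c ⬝ᵥ x)) (div_nonneg (by linarith [hc x₀ hx₀]) (by linarith))
  rw [div_mul_eq_mul_div, div_neg, mul_div_assoc, div_self hneg.ne] at this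
  linarith

variable (A grp) in
def dualRow (j : Fin E) : (Fin m → ℝ) × (Fin n → ℝ) →ₗ[ℝ] ℝ where
  toFun u := u.2 (grp j) + ∑ q, A q j * u.1 q
  map_add' u v := by simp only [Prod.fst_add, Prod.snd_add, Pi.add_apply, mul_add,
    Finset.sum_add_distrib]; ring
  map_smul' r u := by simp only [Prod.smul_fst, Prod.smul_snd, Pi.smul_apply, smul_eq_mul,
    RingHom.id_apply, mul_add, Finset.mul_sum, mul_left_comm]

variable (b) in
def dualObjLin : (Fin m → ℝ) × (Fin n → ℝ) →ₗ[ℝ] ℝ where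
  toFun u := dualObj b u.1 u.2
  map_add' u v := by simp only [dualObj, Prod.fst_add, Prod.snd_add, dotProduct_add,
    Pi.add_apply, Finset.sum_add_distrib]; ring
  map_smul' r u := by simp only [dualObj, Prod.smul_fst, Prod.smul_snd, dotProduct_smul,
    Pi.smul_apply, smul_eq_mul, RingHom.id_apply, Finset.mul_sum, mul_add]

theorem exists_dualFeas_dualObj_nonneg {c : Fin E → ℝ} (hfeas : ∃ x, Feas A b grp x)
    (hc : ∀ x, Feas A b grp x → 0 ≤ c ⬝ᵥ x) :
    ∃ uq uv, DualFeas A c grp uq uv ∧ 0 ≤ dualObj b uq uv := by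
  let a : Fin E ⊕ Fin m ⊕ Unit → (Fin m → ℝ) × (Fin n → ℝ) →ₗ[ℝ] ℝ :=
    Sum.elim (dualRow A grp) (Sum.elim (fun q => -(LinearMap.proj q ∘ₗ LinearMap.fst ℝ _ _))
      fun _ => -dualObjLin b)
  obtain ⟨x₀, hx₀⟩ := hfeas
  obtain ⟨u, hu⟩ | ⟨w, hw, hwa, hwc⟩ := farkas_alternative Finset.univ a (Sum.elim c 0)
  · refine ⟨u.1, u.2, ⟨fun q => ?_, fun j => hu (.inl j) (Finset.mem_univ _)⟩, ?_⟩
    · simpa [a] using hu (.inr (.inl q)) (Finset.mem_univ _)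
    · simpa [a, dualObjLin] using hu (.inr (.inr ())) (Finset.mem_univ _)
  exfalso
  have hAx : w (.inr (.inr ())) • b ≤ A *ᵥ fun j => w (.inl j) := fun q => by
    have h : ∑ j, w (.inl j) * A q j - w (.inr (.inl q)) - w (.inr (.inr ())) * b q = 0 := by
      simpa [a, dualRow, dualObjLin, dualObj, Pi.single_apply, Fintype.sum_sum_type,
        sub_eq_add_neg, add_assoc] using congrArg (fun φ : _ →ₗ[ℝ] ℝ => φ (Pi.single q 1, 0)) hwa
    have hz : 0 ≤ w (.inr (.inl q)) := hw _
    simp only [Pi.smul_apply, smul_eq_mul, mulVec, dotProduct, mul_comm (A q _)]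
    linarith
  have hgrp : ∀ i, (∑ j, if grp j = i then w (.inl j) else 0) = w (.inr (.inr ())) := fun i => by
    have h : (∑ j, if grp j = i then w (.inl j) else 0) - w (.inr (.inr ())) = 0 := by
      simpa [a, dualRow, dualObjLin, dualObj, Pi.single_apply, Fintype.sum_sum_type,
        sub_eq_add_neg, add_assoc] using congrArg (fun φ : _ →ₗ[ℝ] ℝ => φ (0, Pi.single i 1)) hwa
    linarith
  have hcx : c ⬝ᵥ (fun j => w (.inl j)) < 0 := by
    simpa [Fintype.sum_sum_type, dotProduct, mul_comm] using hwc
  exact hcx.not_ge (dotProduct_nonneg_of_recession hx₀ (fun j => hw _) (hw _)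
    hAx hgrp hc)

end PartitionLP

section Duality

variable {m n E : ℕ} {A : Matrix (Fin m) (Fin E) ℝ} {b : Fin m → ℝ} {c : Fin E → ℝ}
  {grp : Fin E → Fin n} {x : Fin E → ℝ} {uq : Fin m → ℝ} {uv : Fin n → ℝ}

theorem dualFeas_iff_rc_nonneg :
    DualFeas A c grp uq uv ↔ 0 ≤ uq ∧ ∀ j, 0 ≤ rc A c grp uq uv j := by
  simp only [DualFeas, rc, sub_sub, sub_nonneg]

theorem Feas.dotProduct_eq (hx : Feas A b grp x) (uq : Fin m → ℝ) (uv : Fin n → ℝ) :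
    c ⬝ᵥ x = dualObj b uq uv + rc A c grp uq uv ⬝ᵥ x + uq ⬝ᵥ (A *ᵥ x - b) := by
  have hgrp : (fun j => uv (grp j)) ⬝ᵥ x = ∑ i, uv i := by
    rw [dotProduct, ← Finset.sum_fiberwise Finset.univ grp]
    refine Finset.sum_congr rfl fun i _ => ?_
    rw [Finset.sum_congr rfl fun j hj => by rw [(Finset.mem_filter.1 hj).2], ← Finset.mul_sum,
      Finset.sum_filter, hx.2.1 i, mul_one]
  have hA : (fun j => ∑ q, A q j * uq q) ⬝ᵥ x = uq ⬝ᵥ (A *ᵥ x) := by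
    rw [dotProduct_mulVec]
    simp only [vecMul, dotProduct, mul_comm]
  have hrc : rc A c grp uq uv = c - (fun j => uv (grp j)) - fun j => ∑ q, A q j * uq q := rfl
  rw [hrc, sub_dotProduct, sub_dotProduct, hgrp, hA, dotProduct_sub, dualObj, dotProduct_comm b]
  ring

theorem Feas.dualObj_le (hx : Feas A b grp x) (hu : DualFeas A c grp uq uv) :
    dualObj b uq uv ≤ c ⬝ᵥ x := by
  rw [dualFeas_iff_rc_nonneg] at hu
  rw [hx.dotProduct_eq uq uv, add_assoc, le_add_iff_nonneg_right]
  exact add_nonneg (dotProduct_nonneg_of_nonneg hu.2 hx.2.2)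
    (dotProduct_nonneg_of_nonneg hu.1 (sub_nonneg.2 hx.1))

theorem Feas.rc_eq_zero (hx : Feas A b grp x) (hu : DualFeas A c grp uq uv)
    (hopt : dualObj b uq uv = c ⬝ᵥ x) {j : Fin E} (hj : x j ≠ 0) : rc A c grp uq uv j = 0 := by
  rw [dualFeas_iff_rc_nonneg] at hu
  have hterm : ∀ k ∈ Finset.univ, 0 ≤ rc A c grp uq uv k * x k :=
    fun k _ => mul_nonneg (hu.2 k) (hx.2.2 k)
  have hslack : rc A c grp uq uv ⬝ᵥ x = 0 := by
    have := hx.dotProduct_eq (c := c) uq uv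
    have := dotProduct_nonneg_of_nonneg hu.1 (sub_nonneg.2 hx.1)
    have := dotProduct_nonneg_of_nonneg hu.2 hx.2.2
    linarith
  have := (Finset.sum_eq_zero_iff_of_nonneg hterm).1 hslack j (Finset.mem_univ j)
  exact (mul_eq_zero.1 this).resolve_right hj

theorem exists_dual_optimal_rc_ge {δ : Fin E → ℝ} (hδ : 0 ≤ δ) {x₀ : Fin E → ℝ}
    (hx₀ : Feas A b grp x₀) (hcx₀ : c ⬝ᵥ x₀ = 0) (hc : ∀ x, Feas A b grp x → 0 ≤ (c - δ) ⬝ᵥ x) :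
    ∃ uq uv, DualFeas A c grp uq uv ∧ dualObj b uq uv = 0 ∧ ∀ j, δ j ≤ rc A c grp uq uv j := by
  obtain ⟨uq, uv, hu, hobj⟩ := exists_dualFeas_dualObj_nonneg ⟨x₀, hx₀⟩ hc
  rw [dualFeas_iff_rc_nonneg] at hu
  have hrc : ∀ j, δ j ≤ rc A c grp uq uv j := fun j => by
    have := hu.2 j
    simp only [rc, Pi.sub_apply] at this ⊢
    linarith
  have hu' : DualFeas A c grp uq uv :=
    dualFeas_iff_rc_nonneg.2 ⟨hu.1, fun j => (hδ j).trans (hrc j)⟩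
  exact ⟨uq, uv, hu', le_antisymm (hcx₀ ▸ hx₀.dualObj_le hu') hobj, hrc⟩

end Duality

theorem sum_ite_inv_succ_lt_one {E : ℕ} (p : Fin E → Prop) [DecidablePred p] :
    ∑ j, (if p j then ((E : ℝ) + 1)⁻¹ else 0) < 1 := calc
  _ ≤ ∑ _j : Fin E, ((E : ℝ) + 1)⁻¹ := Finset.sum_le_sum fun j _ => by
        split_ifs
        exacts [le_rfl, by positivity]
  _ < 1 := by
        rw [Finset.sum_const, Finset.card_univ, Fintype.card_fin, nsmul_eq_mul,
          mul_inv_lt_iff₀ (by positivity)]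
        linarith

section Filtering

variable {m n E : ℕ} {A : Matrix (Fin m) (Fin E) ℝ} {b : Fin m → ℝ} {c δ : Fin E → ℝ}
  {grp : Fin E → Fin n}

variable (A b grp) in
def IsIdealFormulation : Prop :=
  ∀ c' : Fin E → ℝ, (∃ x₀, Feas A b grp x₀) →
    ∃ xt, Feas A b grp xt ∧ Integral xt ∧ ∀ y, Feas A b grp y → c' ⬝ᵥ xt ≤ c' ⬝ᵥ y

theorem Integral.dotProduct_eq_zero_of_lt_one {x : Fin E → ℝ} (hx : Integral x)
    (hc : ∀ j, c j = 0 ∨ c j = 1) (h : c ⬝ᵥ x < 1) : c ⬝ᵥ x = 0 := by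
  have hterm : ∀ j, c j * x j = 0 ∨ c j * x j = 1 := fun j => by
    rcases hc j with h₁ | h₁ <;> rcases hx j with h₂ | h₂ <;> simp [h₁, h₂]
  have hnonneg : ∀ j ∈ Finset.univ, 0 ≤ c j * x j := fun j _ => by
    rcases hterm j with h' | h' <;> simp [h']
  refine Finset.sum_eq_zero fun j _ => (hterm j).resolve_right fun hj => ?_
  have := Finset.single_le_sum hnonneg (Finset.mem_univ j)
  rw [hj] at this
  exact this.not_gt h

theorem Integral.dotProduct_le {x : Fin E → ℝ} (hx : Integral x) (hδ : 0 ≤ δ)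
    (hδ₁ : ∑ j, δ j < 1) (hc : 0 ≤ c ⬝ᵥ x) (hc₁ : ∀ j, δ j ≠ 0 → x j = 1 → 1 ≤ c ⬝ᵥ x) :
    δ ⬝ᵥ x ≤ c ⬝ᵥ x := by
  by_cases h : ∃ j, δ j ≠ 0 ∧ x j = 1
  · obtain ⟨j, hδj, hxj⟩ := h
    calc δ ⬝ᵥ x ≤ ∑ j, δ j := Finset.sum_le_sum fun k _ =>
          mul_le_of_le_one_right (hδ k) (by rcases hx k with h | h <;> simp [h])
      _ ≤ 1 := hδ₁.le
      _ ≤ c ⬝ᵥ x := hc₁ j hδj hxj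
  · push Not at h
    have : δ ⬝ᵥ x = 0 := Finset.sum_eq_zero fun k _ => by
      rcases eq_or_ne (δ k) 0 with hk | hk
      · simp [hk]
      · simp [(hx k).resolve_right (h k hk)]
    rw [this]
    exact hc

theorem IsIdealFormulation.dotProduct_sub_nonneg (hideal : IsIdealFormulation A b grp)
    (hδ : 0 ≤ δ) (hδ₁ : ∑ j, δ j < 1) (hc : ∀ x, Feas A b grp x → 0 ≤ c ⬝ᵥ x)
    (hc₁ : ∀ j, δ j ≠ 0 → ∀ x, Feas A b grp x → x j = 1 → 1 ≤ c ⬝ᵥ x)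
    {y : Fin E → ℝ} (hy : Feas A b grp y) : 0 ≤ (c - δ) ⬝ᵥ y := by
  obtain ⟨xt, hxt, hxt_int, hxt_min⟩ := hideal (c - δ) ⟨y, hy⟩
  calc 0 ≤ (c - δ) ⬝ᵥ xt := by
        rw [sub_dotProduct, sub_nonneg]
        exact hxt_int.dotProduct_le hδ hδ₁ (hc xt hxt) fun j hj => hc₁ j hj xt hxt
    _ ≤ (c - δ) ⬝ᵥ y := hxt_min y hy

theorem IsIdealFormulation.exists_feas_dotProduct_eq_zero (hideal : IsIdealFormulation A b grp)
    (hc01 : ∀ j, c j = 0 ∨ c j = 1) (hc : ∀ x, Feas A b grp x → 0 ≤ c ⬝ᵥ x)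
    {x : Fin E → ℝ} {j : Fin E} (hx : Feas A b grp x) (hxj : x j = 1) (hcx : c ⬝ᵥ x < 1) :
    ∃ x', Feas A b grp x' ∧ x' j = 1 ∧ c ⬝ᵥ x' = 0 := by
  -- rewarding `x j` forces an integral optimum to pick `j` without raising its cost above `c ⬝ᵥ x`
  obtain ⟨xt, hxt, hxt_int, hxt_min⟩ := hideal (c - Pi.single j 2) ⟨x, hx⟩
  have hcost : ∀ y, (c - Pi.single j 2) ⬝ᵥ y = c ⬝ᵥ y - 2 * y j := fun y => by
    rw [sub_dotProduct, single_dotProduct]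
  have hmin := hxt_min x hx
  rw [hcost, hcost, hxj] at hmin
  have hxtj : xt j = 1 := (hxt_int j).resolve_left fun h₀ => by
    rw [h₀] at hmin
    linarith [hc xt hxt]
  rw [hxtj] at hmin
  exact ⟨xt, hxt, hxtj, hxt_int.dotProduct_eq_zero_of_lt_one hc01 (by linarith)⟩

end Filtering

theorem stmt10_general {m n E : ℕ} (A : Matrix (Fin m) (Fin E) ℝ) (b : Fin m → ℝ)
    (c : Fin E → ℝ) (grp : Fin E → Fin n)
    (hc : ∀ j : Fin E, c j = 0 ∨ c j = 1)
    (hz : IsLeast {z | ∃ x : Fin E → ℝ, Feas A b grp x ∧ c ⬝ᵥ x = z} 0)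
    (hideal : ∀ c' : Fin E → ℝ, (∃ x0 : Fin E → ℝ, Feas A b grp x0) →
      ∃ xt : Fin E → ℝ, Feas A b grp xt ∧ Integral xt ∧
        ∀ y : Fin E → ℝ, Feas A b grp y → c' ⬝ᵥ xt ≤ c' ⬝ᵥ y)
    (R : Fin E → ℝ)
    (hR : ∀ j : Fin E,
      IsLeast {z | ∃ x : Fin E → ℝ, Feas A b grp x ∧ x j = 1 ∧ c ⬝ᵥ x = z} (R j)) :
    ∃ (uq : Fin m → ℝ) (uv : Fin n → ℝ),
      DualFeas A c grp uq uv ∧ dualObj b uq uv = 0 ∧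
      ∀ j : Fin E, (1 ≤ R j ↔ 0 < rc A c grp uq uv j) := by
  obtain ⟨⟨x₀, hx₀, hcx₀⟩, hlb⟩ := hz
  have hc_nonneg : ∀ x, Feas A b grp x → 0 ≤ c ⬝ᵥ x := fun x hx => hlb ⟨x, hx, rfl⟩
  set δ : Fin E → ℝ := fun j => if 1 ≤ R j then ((E : ℝ) + 1)⁻¹ else 0
  have hδ : 0 ≤ δ := fun j => by positivity
  have hR_of_δ : ∀ j, δ j ≠ 0 → 1 ≤ R j := fun j hj => by_contra fun h => hj (if_neg h)
  have hperturbed : ∀ x, Feas A b grp x → 0 ≤ (c - δ) ⬝ᵥ x := fun x hx =>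
    IsIdealFormulation.dotProduct_sub_nonneg hideal hδ (sum_ite_inv_succ_lt_one _) hc_nonneg
      (fun j hj y hy hyj => (hR_of_δ j hj).trans ((hR j).2 ⟨y, hy, hyj, rfl⟩)) hx
  obtain ⟨uq, uv, hu, hobj, hrc⟩ := exists_dual_optimal_rc_ge hδ hx₀ hcx₀ hperturbed
  refine ⟨uq, uv, hu, hobj, fun j => ⟨fun hj => ?_, fun hpos => ?_⟩⟩
  · have hδj : δ j = ((E : ℝ) + 1)⁻¹ := if_pos hj
    exact lt_of_lt_of_le (by positivity) (hδj ▸ hrc j)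
  · by_contra hj
    obtain ⟨xR, hxR, hxRj, hcxR⟩ := (hR j).1
    obtain ⟨x, hx, hxj, hcx⟩ := IsIdealFormulation.exists_feas_dotProduct_eq_zero hideal hc
      hc_nonneg hxR hxRj (hcxR ▸ not_le.1 hj)
    exact hpos.ne' (hx.rc_eq_zero hu (hobj.trans hcx.symm) (hxj ▸ one_ne_zero))

/-- Single dual solution suffices for satisfaction filtering: for the 0/1-cost instance
of an ideal LP formulation with partition constraints whose optimum is z* = 0, where
every index lies in some feasible integral solution and R_j denotes the (attained)
optimum of the problem restricted by x_j = 1 (= the exact reduced cost since z* = 0),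
there exists a single dual optimal solution ũ such that for every index j,
R_j ≥ 1 ↔ r_j(ũ) > 0. -/
theorem stmt10 {m n E : ℕ} (A : Matrix (Fin m) (Fin E) ℝ) (b : Fin m → ℝ)
    (c : Fin E → ℝ) (grp : Fin E → Fin n)
    (hc : ∀ j : Fin E, c j = 0 ∨ c j = 1)
    (hz : IsLeast {z | ∃ x : Fin E → ℝ, Feas A b grp x ∧ c ⬝ᵥ x = z} 0)
    (hideal : ∀ c' : Fin E → ℝ, (∃ x0 : Fin E → ℝ, Feas A b grp x0) →
      ∃ xt : Fin E → ℝ, Feas A b grp xt ∧ Integral xt ∧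
        ∀ y : Fin E → ℝ, Feas A b grp y → c' ⬝ᵥ xt ≤ c' ⬝ᵥ y)
    (hsupp : ∀ j : Fin E, ∃ x : Fin E → ℝ, Feas A b grp x ∧ Integral x ∧ x j = 1)
    (R : Fin E → ℝ)
    (hR : ∀ j : Fin E,
      IsLeast {z | ∃ x : Fin E → ℝ, Feas A b grp x ∧ x j = 1 ∧ c ⬝ᵥ x = z} (R j)) :
    ∃ (uq : Fin m → ℝ) (uv : Fin n → ℝ),
      DualFeas A c grp uq uv ∧ dualObj b uq uv = 0 ∧
      ∀ j : Fin E, (1 ≤ R j ↔ 0 < rc A c grp uq uv j) :=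
  stmt10_general A b c grp hc hz hideal R hR
end

section
/- In the cyclic alldifferent instance (costs c_{ij} = 0 if i ≤ j, 1 otherwise, on {0,…,n}²), for every edge (k,l) ∈ L = {(i,i−1): 1 ≤ i ≤ n} ∪ {(0,n)}, the minimum cost of a perfect matching of {0,…,n} to {0,…,n} using edge (k,l) equals 1. -/
open Finset

/-- Assignment cost of the cyclic alldifferent instance on {0,…,n}:
c_{ij} = 0 if i ≤ j, 1 otherwise. -/
noncomputable def acost (n : ℕ) (i j : Fin (n + 1)) : ℝ := if i ≤ j then 0 else 1

/-- The cycle L = {(i,i−1) : 1 ≤ i ≤ n} ∪ {(0,n)}, as the graph of the permutation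
i ↦ i − 1 (mod n+1). -/
noncomputable def sigmaL (n : ℕ) : Equiv.Perm (Fin (n + 1)) := (finRotate (n + 1)).symm

/-! The identity matching is the only one of cost 0: a permutation of a finite poset that
never moves an element down is the identity, since following an orbit climbs back to its
start. For `n > 0` the edge `(k, l)` of `L` is not a loop, so every matching using it costs
at least 1, and the transposition of `k` and `l` costs exactly 1. -/

namespace Equiv.Perm

variable {α : Type*}

theorem le_pow_succ_apply [Preorder α] {σ : Perm α} (h : ∀ a, a ≤ σ a) (a : α) (k : ℕ) :
    σ a ≤ (σ ^ (k + 1)) a := by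
  induction k with
  | zero => simp
  | succ k ih => exact ih.trans (by rw [pow_succ' σ (k + 1), mul_apply]; exact h _)

theorem eq_one_of_forall_le_apply [PartialOrder α] [Finite α] {σ : Perm α}
    (h : ∀ a, a ≤ σ a) : σ = 1 := by
  ext a
  obtain ⟨k, hk⟩ := Nat.exists_eq_add_one_of_ne_zero (orderOf_pos σ).ne'
  have hback := le_pow_succ_apply h a k
  rw [← hk, pow_orderOf_eq_one, one_apply] at hback
  exact hback.antisymm (h a)

theorem sum_apply_swap {M : Type*} [Fintype α] [DecidableEq α] [AddCommMonoid M]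
    {c : α → α → M} (hc : ∀ a, c a a = 0) {k l : α} (hkl : k ≠ l) :
    ∑ i, c i (swap k l i) = c k l + c l k := by
  rw [Fintype.sum_eq_add k l hkl fun i hi => by rw [swap_apply_of_ne_of_ne hi.1 hi.2, hc],
    swap_apply_left, swap_apply_right]

end Equiv.Perm

theorem sigmaL_apply_ne {n : ℕ} (hn : 0 < n) (k : Fin (n + 1)) : sigmaL n k ≠ k := by
  have hk : k ∈ (finRotate (n + 1)).support := by
    rw [support_finRotate_of_le (by omega)]
    exact mem_univ k
  rw [Equiv.Perm.mem_support] at hk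
  exact fun h => hk ((Equiv.symm_apply_eq _).mp h).symm

theorem acost_nonneg (n : ℕ) (i j : Fin (n + 1)) : 0 ≤ acost n i j := by
  unfold acost; split_ifs <;> norm_num

theorem acost_self (n : ℕ) (i : Fin (n + 1)) : acost n i i = 0 := by
  simp [acost]

theorem acost_add_acost_of_ne {n : ℕ} {i j : Fin (n + 1)} (h : i ≠ j) :
    acost n i j + acost n j i = 1 := by
  rcases h.lt_or_gt with hij | hji
  · simp [acost, hij.le, hij.not_ge]
  · simp [acost, hji.le, hji.not_ge]

theorem one_le_sum_acost_of_ne_one {n : ℕ} {σ : Equiv.Perm (Fin (n + 1))} (hσ : σ ≠ 1) :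
    1 ≤ ∑ i, acost n i (σ i) := by
  obtain ⟨i, hi⟩ : ∃ i, ¬ i ≤ σ i := by
    by_contra! h
    exact hσ (Equiv.Perm.eq_one_of_forall_le_apply h)
  calc (1 : ℝ) = acost n i (σ i) := by simp [acost, hi]
    _ ≤ ∑ j, acost n j (σ j) :=
      single_le_sum (fun j _ => acost_nonneg n j (σ j)) (mem_univ i)

/-- In the cyclic alldifferent instance, for every edge (k, l) ∈ L (i.e. l = σL k),
the minimum cost of a perfect matching (bijection) using the edge (k, l) equals 1. -/
theorem stmt14 (n : ℕ) (hn : 0 < n) (k l : Fin (n + 1)) (hkl : l = sigmaL n k) :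
    IsLeast {z | ∃ σ : Equiv.Perm (Fin (n + 1)), σ k = l ∧
      (∑ i : Fin (n + 1), acost n i (σ i)) = z} 1 := by
  have hlk : l ≠ k := hkl ▸ sigmaL_apply_ne hn k
  refine ⟨⟨Equiv.swap k l, Equiv.swap_apply_left k l, ?_⟩, ?_⟩
  · rw [Equiv.Perm.sum_apply_swap (acost_self n) hlk.symm, acost_add_acost_of_ne hlk.symm]
  · rintro _ ⟨σ, hσk, rfl⟩
    refine one_le_sum_acost_of_ne_one fun hσ => hlk ?_
    rw [← hσk, hσ, Equiv.Perm.one_apply]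
end
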